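/- arXiv:1703.08437 — 2 statements merged into one kernel-verified Lean document; each statement's English description precedes it below -/
import Mathlib

section
/- If μ_s > 1 and μ_s − 1 ≤ |γ²x₀| < μ_s, then the solution x(t) = x₀, θ(t) = θ₀ + t of the sticking dynamics leaves the region {|γ²x + sin θ| < μ_s} in finite positive time. -/
open Real

lemma hit_sin (θ0 s : ℝ) : ∃ t : ℝ, 0 < t ∧ Real.sin (θ0 + t) = Real.sin s := by
  set n : ℤ := ⌊(θ0 - s) / (2 * π)⌋ + 1 with hn
  refine ⟨s - θ0 + n * (2 * π), ?_, ?_⟩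
  · have hπ : 0 < 2 * π := by positivity
    have h1 : (θ0 - s) / (2 * π) < (n : ℝ) := by
      rw [hn]; push_cast; exact Int.lt_floor_add_one _
    have := (div_lt_iff₀ hπ).mp h1
    linarith
  · have : θ0 + (s - θ0 + n * (2 * π)) = s + n * (2 * π) := by ring
    rw [this, Real.sin_add_int_mul_two_pi]

/-- If μ_s > 1 and μ_s − 1 ≤ |γ²x₀| < μ_s, the sticking solution x(t) = x₀,
θ(t) = θ₀ + t leaves the region {|γ²x + sin θ| < μ_s} in finite positive time. -/
theorem sticking_escape (γ μs x0 θ0 : ℝ) (hγ : 0 < γ) (hμs : 1 < μs)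
    (hlow : μs - 1 ≤ |γ ^ 2 * x0|) (hhigh : |γ ^ 2 * x0| < μs) :
    ∃ t : ℝ, 0 < t ∧ μs ≤ |γ ^ 2 * x0 + Real.sin (θ0 + t)| := by
  set a : ℝ := γ ^ 2 * x0 with ha
  rcases le_or_gt 0 a with h0 | h0
  · obtain ⟨t, ht, hs⟩ := hit_sin θ0 (π / 2)
    refine ⟨t, ht, ?_⟩
    rw [hs, Real.sin_pi_div_two]
    rw [abs_of_nonneg h0] at hlow
    rw [abs_of_nonneg (by linarith)]
    linarith
  · obtain ⟨t, ht, hs⟩ := hit_sin θ0 (-(π / 2))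
    refine ⟨t, ht, ?_⟩
    rw [hs, Real.sin_neg, Real.sin_pi_div_two]
    rw [abs_of_neg h0] at hlow
    rw [abs_of_neg (by linarith)]
    linarith
end

section
/- The desingularized reduced problem ŷ̇ = −cos θ, θ̇ = μ_d φ'(ŷ) on ℝ × ℝ/2πℤ has exactly four equilibria in the strip |ŷ| ≤ δ ≤ 1: (δ, π/2), (δ, 3π/2), (−δ, π/2), (−δ, 3π/2). The points (δ, 3π/2) and (−δ, π/2) are hyperbolic saddles with eigenvalues ±√(μ_d|φ''(δ)|); the points (δ, π/2) and (−δ, 3π/2) are linear centers with eigenvalues ±i√(μ_d|φ''(δ)|). -/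
/-!
An equilibrium needs `cos θ = 0`, which on `[0, 2π)` means `θ ∈ {π/2, 3π/2}`, and `φ'(ŷ) = 0`,
which in the strip forces `ŷ = ±δ` because `φ' > 0` inside it and `φ'` is even. The Jacobian is
antidiagonal, so its eigenvalues are the square roots of `sin θ · μ_d φ''(ŷ)`; since `φ''` is odd,
this product is `μ_d |φ''(δ)|` at `(δ, 3π/2)`, `(-δ, π/2)` and `-μ_d |φ''(δ)|` at the other two.
-/

open Real

/-- The Jacobian of the desingularized problem (ŷ̇, θ̇) = (−cos θ, μ_d φ'(ŷ))
at a point (ŷ, θ): [[0, sin θ], [μ_d φ''(ŷ), 0]]. -/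
noncomputable def Jdes (μd : ℝ) (φ : ℝ → ℝ) (yhat θ : ℝ) : Matrix (Fin 2) (Fin 2) ℝ :=
  !![0, Real.sin θ; μd * deriv (deriv φ) yhat, 0]

lemma deriv_neg_of_odd {f : ℝ → ℝ} (hf : ∀ u, f (-u) = -f u) (x : ℝ) :
    deriv f (-x) = deriv f x := by
  have h := deriv_comp_neg (f := f) (x := x)
  simp only [hf, deriv.fun_neg] at h
  linarith

lemma deriv_neg_of_even {f : ℝ → ℝ} (hf : ∀ u, f (-u) = f u) (x : ℝ) :
    deriv f (-x) = -deriv f x := by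
  have h := deriv_comp_neg (f := f) (x := x)
  simp only [hf] at h
  linarith

lemma eq_or_eq_neg_of_deriv_eq_zero {f : ℝ → ℝ} {δ y : ℝ}
    (hpos : ∀ u, -δ < u → u < δ → 0 < deriv f u) (hy : |y| ≤ δ) (h : deriv f y = 0) :
    y = δ ∨ y = -δ := by
  obtain ⟨hlo, hhi⟩ := abs_le.mp hy
  rcases hhi.eq_or_lt with rfl | hhi
  · exact .inl rfl
  rcases hlo.eq_or_lt with rfl | hlo
  · exact .inr rfl
  exact absurd h (hpos y hlo hhi).ne'

lemma sin_three_pi_div_two : sin (3 * π / 2) = -1 := by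
  rw [show 3 * π / 2 = π / 2 + π by ring, sin_add_pi, sin_pi_div_two]

lemma cos_three_pi_div_two : cos (3 * π / 2) = 0 := by
  rw [show 3 * π / 2 = π / 2 + π by ring, cos_add_pi, cos_pi_div_two, neg_zero]

lemma cos_eq_zero_iff_of_mem_Ico {θ : ℝ} (hθ : θ ∈ Set.Ico 0 (2 * π)) :
    cos θ = 0 ↔ θ = π / 2 ∨ θ = 3 * π / 2 := by
  constructor
  · intro h
    obtain ⟨k, rfl⟩ := cos_eq_zero_iff.mp h
    obtain ⟨h0, h2⟩ := hθ
    have hlo : (0 : ℝ) ≤ 2 * k + 1 := by nlinarith [pi_pos]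
    have hhi : (2 * k + 1 : ℝ) < 4 := by nlinarith [pi_pos]
    have hk : k = 0 ∨ k = 1 := by
      have : (0 : ℤ) ≤ 2 * k + 1 ∧ 2 * k + 1 < 4 := ⟨by exact_mod_cast hlo, by exact_mod_cast hhi⟩
      omega
    rcases hk with rfl | rfl
    · left; push_cast; ring
    · right; push_cast; ring
  · rintro (rfl | rfl)
    · exact cos_pi_div_two
    · exact cos_three_pi_div_two

lemma exists_eigenvector_antidiagonal {R : Type*} [CommRing R] {a b l : R} (hl : l ≠ 0)
    (h : l * l = a * b) :
    ∃ v : Fin 2 → R, v ≠ 0 ∧ (!![0, a; b, 0] : Matrix (Fin 2) (Fin 2) R).mulVec v = l • v := by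
  refine ⟨![l, b], fun hv => hl (congrFun hv 0), ?_⟩
  ext i; fin_cases i <;> simp [Matrix.mulVec, dotProduct, h, mul_comm]

lemma Jdes_map_ofReal (μd : ℝ) (φ : ℝ → ℝ) (y θ : ℝ) :
    (Jdes μd φ y θ).map Complex.ofReal =
      !![0, (sin θ : ℂ); ((μd * deriv (deriv φ) y : ℝ) : ℂ), 0] := by
  ext i j; fin_cases i <;> fin_cases j <;> simp [Jdes]

lemma mul_self_eq_one_of_mem_pair {s : ℝ} (hs : s ∈ ({1, -1} : Set ℝ)) : s * s = 1 := by
  rcases hs with rfl | rfl <;> norm_num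

lemma Jdes_exists_real_eigenvector {μd K y θ s : ℝ} {φ : ℝ → ℝ} (hK : 0 < K)
    (hprod : sin θ * (μd * deriv (deriv φ) y) = K) (hs : s ∈ ({1, -1} : Set ℝ)) :
    ∃ v : Fin 2 → ℝ, v ≠ 0 ∧ (Jdes μd φ y θ).mulVec v = (s * √K) • v := by
  have hs1 := mul_self_eq_one_of_mem_pair hs
  refine exists_eigenvector_antidiagonal ?_ ?_
  · exact mul_ne_zero (left_ne_zero_of_mul_eq_one hs1) (sqrt_pos.2 hK).ne'
  · rw [hprod, mul_mul_mul_comm, hs1, mul_self_sqrt hK.le, one_mul]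

lemma Jdes_exists_imaginary_eigenvector {μd K y θ s : ℝ} {φ : ℝ → ℝ} (hK : 0 < K)
    (hprod : sin θ * (μd * deriv (deriv φ) y) = -K) (hs : s ∈ ({1, -1} : Set ℝ)) :
    ∃ v : Fin 2 → ℂ, v ≠ 0 ∧
      ((Jdes μd φ y θ).map Complex.ofReal).mulVec v = ((s : ℂ) * Complex.I * (√K : ℂ)) • v := by
  have hs1 : (s : ℂ) * s = 1 := by exact_mod_cast mul_self_eq_one_of_mem_pair hs
  have hK' : (√K : ℂ) * √K = K := by exact_mod_cast mul_self_sqrt hK.le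
  rw [Jdes_map_ofReal]
  refine exists_eigenvector_antidiagonal ?_ ?_
  · have : (√K : ℂ) ≠ 0 := by exact_mod_cast (sqrt_pos.2 hK).ne'
    exact mul_ne_zero (mul_ne_zero (left_ne_zero_of_mul_eq_one hs1) Complex.I_ne_zero) this
  · have hprod' : (sin θ : ℂ) * ((μd * deriv (deriv φ) y : ℝ) : ℂ) = -K := by
      exact_mod_cast congrArg Complex.ofReal hprod
    rw [hprod']
    linear_combination (Complex.I * Complex.I * (√K : ℂ) * √K) * hs1
      + Complex.I * Complex.I * hK' + K * Complex.I_mul_I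

lemma equilibria_in_strip_eq {μ δ : ℝ} {f : ℝ → ℝ} (hμ : μ ≠ 0) (hδ : 0 ≤ δ)
    (hpos : ∀ u, -δ < u → u < δ → 0 < deriv f u) (hδf : deriv f δ = 0)
    (hδf' : deriv f (-δ) = 0) :
    {p : ℝ × ℝ | |p.1| ≤ δ ∧ p.2 ∈ Set.Ico (0:ℝ) (2 * π) ∧ -cos p.2 = 0 ∧ μ * deriv f p.1 = 0}
      = {(δ, π / 2), (δ, 3 * π / 2), (-δ, π / 2), (-δ, 3 * π / 2)} := by
  ext ⟨y, θ⟩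
  simp only [Set.mem_ofPred_eq, Set.mem_insert_iff, Set.mem_singleton_iff, Prod.mk.injEq,
    neg_eq_zero, mul_eq_zero, hμ, false_or]
  constructor
  · rintro ⟨hy, hθ, hcos, hf⟩
    have hy' := eq_or_eq_neg_of_deriv_eq_zero hpos hy hf
    have hθ' := (cos_eq_zero_iff_of_mem_Ico hθ).1 hcos
    tauto
  · have hπ := pi_pos
    have hθ₁ : π / 2 ∈ Set.Ico 0 (2 * π) := ⟨by positivity, by linarith⟩
    have hθ₂ : 3 * π / 2 ∈ Set.Ico 0 (2 * π) := ⟨by positivity, by linarith⟩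
    have hy : |δ| ≤ δ := (abs_of_nonneg hδ).le
    have hy' : |-δ| ≤ δ := by rwa [abs_neg]
    rintro (⟨rfl, rfl⟩ | ⟨rfl, rfl⟩ | ⟨rfl, rfl⟩ | ⟨rfl, rfl⟩)
    · exact ⟨hy, hθ₁, cos_pi_div_two, hδf⟩
    · exact ⟨hy, hθ₂, cos_three_pi_div_two, hδf⟩
    · exact ⟨hy', hθ₁, cos_pi_div_two, hδf'⟩
    · exact ⟨hy', hθ₂, cos_three_pi_div_two, hδf'⟩

theorem desingularized_equilibria_general (μd δ : ℝ) (φ : ℝ → ℝ)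
    (hμd : 0 < μd) (hδ0 : 0 < δ)
    (hodd : ∀ u : ℝ, φ (-u) = -φ u)
    (hpos : ∀ u : ℝ, -δ < u → u < δ → 0 < deriv φ u)
    (hder0 : deriv φ δ = 0)
    (hφ'' : deriv (deriv φ) δ < 0) :
    ({p : ℝ × ℝ | |p.1| ≤ δ ∧ p.2 ∈ Set.Ico (0:ℝ) (2 * π) ∧
        -Real.cos p.2 = 0 ∧ μd * deriv φ p.1 = 0}
      = {(δ, π / 2), (δ, 3 * π / 2), (-δ, π / 2), (-δ, 3 * π / 2)}) ∧
    (0 < Real.sqrt (μd * |deriv (deriv φ) δ|)) ∧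
    (∀ p ∈ ({(δ, 3 * π / 2), (-δ, π / 2)} : Set (ℝ × ℝ)),
      ∀ s ∈ ({1, -1} : Set ℝ),
        ∃ v : Fin 2 → ℝ, v ≠ 0 ∧
          (Jdes μd φ p.1 p.2).mulVec v
            = (s * Real.sqrt (μd * |deriv (deriv φ) δ|)) • v) ∧
    (∀ p ∈ ({(δ, π / 2), (-δ, 3 * π / 2)} : Set (ℝ × ℝ)),
      ∀ s ∈ ({1, -1} : Set ℝ),
        ∃ v : Fin 2 → ℂ, v ≠ 0 ∧
          ((Jdes μd φ p.1 p.2).map (Complex.ofReal)).mulVec v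
            = ((s : ℂ) * Complex.I * (Real.sqrt (μd * |deriv (deriv φ) δ|) : ℂ)) • v) := by
  have hφ'_even := deriv_neg_of_odd hodd
  have hφ''_neg : deriv (deriv φ) (-δ) = -deriv (deriv φ) δ := deriv_neg_of_even hφ'_even δ
  have hK : 0 < μd * |deriv (deriv φ) δ| := mul_pos hμd (abs_pos.2 hφ''.ne)
  have habs : |deriv (deriv φ) δ| = -deriv (deriv φ) δ := abs_of_neg hφ''
  refine ⟨equilibria_in_strip_eq hμd.ne' hδ0.le hpos hder0 (by rw [hφ'_even, hder0]), sqrt_pos.2 hK,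
    ?_, ?_⟩
  · rintro p (rfl | rfl) s hs
    · exact Jdes_exists_real_eigenvector hK (by rw [sin_three_pi_div_two, habs]; ring) hs
    · exact Jdes_exists_real_eigenvector hK (by rw [sin_pi_div_two, hφ''_neg, habs]; ring) hs
  · rintro p (rfl | rfl) s hs
    · exact Jdes_exists_imaginary_eigenvector hK (by rw [sin_pi_div_two, habs]; ring) hs
    · exact Jdes_exists_imaginary_eigenvector hK
        (by rw [sin_three_pi_div_two, hφ''_neg, habs]; ring) hs

/-- The desingularized reduced problem ŷ̇ = −cos θ, θ̇ = μ_d φ'(ŷ) has exactly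
four equilibria in the strip |ŷ| ≤ δ (θ ∈ [0,2π)): (δ,π/2), (δ,3π/2), (−δ,π/2),
(−δ,3π/2). The points (δ,3π/2) and (−δ,π/2) are hyperbolic saddles with real
eigenvalues ±√(μ_d|φ''(δ)|); the points (δ,π/2) and (−δ,3π/2) are linear
centers with purely imaginary eigenvalues ±i√(μ_d|φ''(δ)|). -/
theorem desingularized_equilibria (μd δ : ℝ) (φ : ℝ → ℝ)
    (hμd : 0 < μd) (hδ0 : 0 < δ) (hδ1 : δ < 1)
    (hC2 : ContDiff ℝ 2 φ)
    (hodd : ∀ u : ℝ, φ (-u) = -φ u)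
    (hpos : ∀ u : ℝ, -δ < u → u < δ → 0 < deriv φ u)
    (hder0 : deriv φ δ = 0)
    (hneg : ∀ u : ℝ, (δ < u ∧ u < 1) ∨ (-1 < u ∧ u < -δ) → deriv φ u < 0)
    (hφ'' : deriv (deriv φ) δ < 0) :
    ({p : ℝ × ℝ | |p.1| ≤ δ ∧ p.2 ∈ Set.Ico (0:ℝ) (2 * π) ∧
        -Real.cos p.2 = 0 ∧ μd * deriv φ p.1 = 0}
      = {(δ, π / 2), (δ, 3 * π / 2), (-δ, π / 2), (-δ, 3 * π / 2)}) ∧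
    (0 < Real.sqrt (μd * |deriv (deriv φ) δ|)) ∧
    (∀ p ∈ ({(δ, 3 * π / 2), (-δ, π / 2)} : Set (ℝ × ℝ)),
      ∀ s ∈ ({1, -1} : Set ℝ),
        ∃ v : Fin 2 → ℝ, v ≠ 0 ∧
          (Jdes μd φ p.1 p.2).mulVec v
            = (s * Real.sqrt (μd * |deriv (deriv φ) δ|)) • v) ∧
    (∀ p ∈ ({(δ, π / 2), (-δ, 3 * π / 2)} : Set (ℝ × ℝ)),
      ∀ s ∈ ({1, -1} : Set ℝ),
        ∃ v : Fin 2 → ℂ, v ≠ 0 ∧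
          ((Jdes μd φ p.1 p.2).map (Complex.ofReal)).mulVec v
            = ((s : ℂ) * Complex.I * (Real.sqrt (μd * |deriv (deriv φ) δ|) : ℂ)) • v) :=
  desingularized_equilibria_general μd δ φ hμd hδ0 hodd hpos hder0 hφ''
end
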